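/- arXiv:1811.08647 — 3 statements merged into one kernel-verified Lean document; each statement's English description precedes it below -/
import Mathlib

section
/- Let C be a standard Cauchy variable and ε an independent Rademacher variable. For every a ∈ [-1, 1] and y ∈ ℝ, sinh(arcsinh(aC) + yε) has the same distribution as aC cosh y + √(1 − a²) sinh(yε). -/
/-!
Conditioning on ε, both laws are the even mixture of the images of the Cauchy law μ under
`x ↦ sinh (arsinh (a x) ± y)` and `x ↦ a x cosh y ± √(1 - a²) sinh y`. Since μ is symmetric we
may take `0 < a`; all four maps are then increasing, and as μ(-∞, b] = (arctan b + π/2)/π the two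
mixtures have the same distribution function as soon as the two pairs of arctangents have equal
sums. This holds because `arctan u + arctan v = arg ((1 + i u) (1 + i v))` and the two products of
complex numbers are positive multiples of each other.
-/

open MeasureTheory Real Set ProbabilityTheory
open scoped ENNReal

@[fun_prop]
lemma Real.measurable_arsinh : Measurable arsinh := continuous_arsinh.measurable

lemma Real.arctan_eq_arg (u : ℝ) : arctan u = Complex.arg ⟨1, u⟩ := by
  have hnorm : ‖(⟨1, u⟩ : ℂ)‖ = √(1 + u ^ 2) := by
    rw [Complex.norm_def, Complex.normSq_mk]; ring_nf
  rw [Complex.arg_of_re_nonneg zero_le_one, hnorm, arctan_eq_arcsin]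

lemma Real.arctan_add_arctan_eq_arg (u v : ℝ) :
    arctan u + arctan v = Complex.arg ⟨1 - u * v, u + v⟩ := by
  have hprod : (⟨1 - u * v, u + v⟩ : ℂ) = ⟨1, u⟩ * ⟨1, v⟩ := by
    apply Complex.ext <;> simp [add_comm]
  have hne (w : ℝ) : (⟨1, w⟩ : ℂ) ≠ 0 := fun h => by simpa using congrArg Complex.re h
  have hmem : arctan u + arctan v ∈ Ioc (-π) π := by
    constructor <;> linarith [neg_pi_div_two_lt_arctan u, neg_pi_div_two_lt_arctan v,
      arctan_lt_pi_div_two u, arctan_lt_pi_div_two v]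
  rw [arctan_eq_arg, arctan_eq_arg] at hmem ⊢
  rw [hprod, Complex.arg_mul (hne u) (hne v) hmem]

lemma Real.arctan_add_arctan_eq_of_proportional {u₁ u₂ v₁ v₂ k : ℝ} (hk : 0 < k)
    (hprod : 1 - v₁ * v₂ = k * (1 - u₁ * u₂)) (hsum : v₁ + v₂ = k * (u₁ + u₂)) :
    arctan u₁ + arctan u₂ = arctan v₁ + arctan v₂ := by
  have hmk : (⟨1 - v₁ * v₂, v₁ + v₂⟩ : ℂ) = k * ⟨1 - u₁ * u₂, u₁ + u₂⟩ := by
    apply Complex.ext <;> simp [hprod, hsum]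
  rw [arctan_add_arctan_eq_arg, arctan_add_arctan_eq_arg, hmk, Complex.arg_real_mul _ hk]

lemma arctan_add_arctan_sinh_arsinh_shift {a : ℝ} (ha₀ : 0 < a) (ha₁ : a ≤ 1) (t y : ℝ) :
    arctan (sinh (arsinh t - y) / a) + arctan (sinh (arsinh t + y) / a)
      = arctan ((t - √(1 - a ^ 2) * sinh y) / (a * cosh y))
        + arctan ((t + √(1 - a ^ 2) * sinh y) / (a * cosh y)) := by
  have hcy : 0 < cosh y := cosh_pos y
  have hs : √(1 - a ^ 2) ^ 2 = 1 - a ^ 2 := sq_sqrt (by nlinarith)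
  have hT : cosh (arsinh t) ^ 2 = 1 + t ^ 2 := by rw [cosh_sq', sinh_arsinh]
  rw [sinh_sub, sinh_add, sinh_arsinh]
  apply arctan_add_arctan_eq_of_proportional (k := (cosh y ^ 2)⁻¹) (by positivity)
  · field_simp
    linear_combination sinh y ^ 2 * hs - sinh y ^ 2 * hT + (a ^ 2 + t ^ 2) * cosh_sq' y
  · field_simp
    ring

lemma sinh_arsinh_mul_add_le_iff {a : ℝ} (ha : 0 < a) (x y t : ℝ) :
    sinh (arsinh (a * x) + y) ≤ t ↔ x ≤ sinh (arsinh t - y) / a := by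
  rw [le_div_iff₀ ha, mul_comm x, ← arsinh_le_arsinh, arsinh_sinh,
    ← arsinh_le_arsinh (x := a * x), arsinh_sinh, le_sub_iff_add_le]

lemma mul_mul_add_le_iff {a c : ℝ} (hac : 0 < a * c) (x m t : ℝ) :
    a * x * c + m ≤ t ↔ x ≤ (t - m) / (a * c) := by
  rw [le_div_iff₀ hac, le_sub_iff_add_le, mul_comm x, mul_right_comm]

lemma MeasureTheory.Measure.map_prod_smul_dirac_add_smul_dirac {α β γ : Type*}
    [MeasurableSpace α] [MeasurableSpace β] [MeasurableSpace γ] (μ : Measure α) [SFinite μ]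
    {F : α × β → γ} (hF : Measurable F) (c d : ℝ≥0∞) (s t : β) :
    (μ.prod (c • Measure.dirac s + d • Measure.dirac t)).map F
      = c • μ.map (fun x => F (x, s)) + d • μ.map (fun x => F (x, t)) := by
  rw [Measure.prod_add, Measure.prod_smul_right, Measure.prod_smul_right, Measure.prod_dirac,
    Measure.prod_dirac, Measure.map_add _ _ hF, Measure.map_smul, Measure.map_smul,
    Measure.map_map hF measurable_prodMk_right, Measure.map_map hF measurable_prodMk_right]
  rfl

lemma cauchyMeasure_zero_one_eq :
    cauchyMeasure 0 1 = volume.withDensity fun x => ENNReal.ofReal (1 / (π * (1 + x ^ 2))) := by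
  rw [cauchyMeasure_of_scale_ne_zero 0 one_ne_zero]
  congr with x
  simp [cauchyPDF_def, cauchyPDFReal_def, add_comm, mul_comm]

lemma cauchyMeasure_zero_one_Iic (b : ℝ) :
    cauchyMeasure 0 1 (Iic b) = ENNReal.ofReal ((arctan b + π / 2) / π) := by
  have hint : Integrable (fun x : ℝ => π⁻¹ * (1 + x ^ 2)⁻¹) :=
    integrable_inv_one_add_sq.const_mul π⁻¹
  rw [cauchyMeasure_zero_one_eq, withDensity_apply _ measurableSet_Iic]
  simp only [one_div, mul_inv]
  rw [← ofReal_integral_eq_lintegral_ofReal hint.restrict (.of_forall fun x => by positivity),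
    integral_const_mul, integral_Iic_inv_one_add_sq, inv_mul_eq_div]

lemma map_neg_cauchyMeasure_zero_one : (cauchyMeasure 0 1).map Neg.neg = cauchyMeasure 0 1 := by
  ext s hs
  rw [Measure.map_apply measurable_neg hs, cauchyMeasure_zero_one_eq,
    withDensity_apply _ (measurable_neg hs), withDensity_apply _ hs]
  conv_rhs => rw [← Measure.map_neg_eq_self (volume : Measure ℝ)]
  rw [setLIntegral_map hs (by fun_prop) measurable_neg]
  simp

lemma cauchyMeasure_zero_one_map_Iic {f : ℝ → ℝ} (hf : Measurable f) {t b : ℝ}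
    (hfb : ∀ x, f x ≤ t ↔ x ≤ b) :
    (cauchyMeasure 0 1).map f (Iic t) = ENNReal.ofReal ((arctan b + π / 2) / π) := by
  rw [Measure.map_apply hf measurableSet_Iic, ← cauchyMeasure_zero_one_Iic]
  exact congrArg _ (Set.ext hfb)

lemma cauchyMeasure_zero_one_map_comp_mul_abs {h : ℝ → ℝ} (hh : Measurable h) (a : ℝ) :
    (cauchyMeasure 0 1).map (fun x => h (a * x))
      = (cauchyMeasure 0 1).map (fun x => h (|a| * x)) := by
  rcases le_or_gt 0 a with ha | ha
  · rw [abs_of_nonneg ha]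
  · conv_lhs => rw [← map_neg_cauchyMeasure_zero_one]
    rw [Measure.map_map (by fun_prop) measurable_neg, abs_of_neg ha]
    congr 1
    funext x
    simp

lemma cauchyMeasure_zero_one_map_sinh_arsinh_shift_of_pos {a : ℝ} (ha₀ : 0 < a) (ha₁ : a ≤ 1)
    (y : ℝ) :
    (cauchyMeasure 0 1).map (fun x => sinh (arsinh (a * x) + y))
        + (cauchyMeasure 0 1).map (fun x => sinh (arsinh (a * x) + -y))
      = (cauchyMeasure 0 1).map (fun x => a * x * cosh y + √(1 - a ^ 2) * sinh y)
        + (cauchyMeasure 0 1).map (fun x => a * x * cosh y + √(1 - a ^ 2) * sinh (-y)) := by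
  have hac : 0 < a * cosh y := mul_pos ha₀ (cosh_pos y)
  have hq (b : ℝ) : 0 ≤ (arctan b + π / 2) / π := by
    have := neg_pi_div_two_lt_arctan b
    exact div_nonneg (by linarith) pi_pos.le
  refine Measure.ext_of_Iic _ _ fun t => ?_
  rw [Measure.add_apply, Measure.add_apply,
    cauchyMeasure_zero_one_map_Iic (by fun_prop) (sinh_arsinh_mul_add_le_iff ha₀ · y t),
    cauchyMeasure_zero_one_map_Iic (by fun_prop) (sinh_arsinh_mul_add_le_iff ha₀ · (-y) t),
    cauchyMeasure_zero_one_map_Iic (by fun_prop) (mul_mul_add_le_iff hac · _ t),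
    cauchyMeasure_zero_one_map_Iic (by fun_prop) (mul_mul_add_le_iff hac · _ t),
    ← ENNReal.ofReal_add (hq _) (hq _), ← ENNReal.ofReal_add (hq _) (hq _)]
  congr 1
  simp only [sub_neg_eq_add, sinh_neg, mul_neg]
  linear_combination arctan_add_arctan_sinh_arsinh_shift ha₀ ha₁ t y / π

theorem cauchyMeasure_zero_one_map_sinh_arsinh_shift {a : ℝ} (ha : a ∈ Icc (-1) 1) (y : ℝ) :
    (cauchyMeasure 0 1).map (fun x => sinh (arsinh (a * x) + y))
        + (cauchyMeasure 0 1).map (fun x => sinh (arsinh (a * x) + -y))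
      = (cauchyMeasure 0 1).map (fun x => a * x * cosh y + √(1 - a ^ 2) * sinh y)
        + (cauchyMeasure 0 1).map (fun x => a * x * cosh y + √(1 - a ^ 2) * sinh (-y)) := by
  rcases (abs_nonneg a).eq_or_lt with h0 | hpos
  · obtain rfl : a = 0 := abs_eq_zero.mp h0.symm
    simp
  have habs (h : ℝ → ℝ) (hh : Measurable h) := cauchyMeasure_zero_one_map_comp_mul_abs hh a
  rw [← sq_abs a, habs (fun z => sinh (arsinh z + y)) (by fun_prop),
    habs (fun z => sinh (arsinh z + -y)) (by fun_prop),
    habs (fun z => z * cosh y + √(1 - |a| ^ 2) * sinh y) (by fun_prop),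
    habs (fun z => z * cosh y + √(1 - |a| ^ 2) * sinh (-y)) (by fun_prop)]
  exact cauchyMeasure_zero_one_map_sinh_arsinh_shift_of_pos hpos (abs_le.mpr ha) y

theorem stmt_13 {Ω : Type*} [MeasurableSpace Ω] (P : Measure Ω) [IsProbabilityMeasure P]
    (C ε : Ω → ℝ) (hC : Measurable C) (hε : Measurable ε)
    (hCauchy : P.map C = volume.withDensity (fun x => ENNReal.ofReal (1 / (π * (1 + x ^ 2)))))
    (hRad : P.map ε = ((1:ℝ≥0∞)/2) • Measure.dirac (1:ℝ) + ((1:ℝ≥0∞)/2) • Measure.dirac (-1:ℝ))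
    (hindep : IndepFun C ε P)
    (a y : ℝ) (ha : a ∈ Icc (-1:ℝ) 1) :
    P.map (fun ω => Real.sinh (Real.arsinh (a * C ω) + y * ε ω))
      = P.map (fun ω => a * C ω * Real.cosh y + Real.sqrt (1 - a ^ 2) * Real.sinh (y * ε ω)) := by
  have hmap (F : ℝ × ℝ → ℝ) (hF : Measurable F) : P.map (fun ω => F (C ω, ε ω))
      = (1 / 2 : ℝ≥0∞) • (cauchyMeasure 0 1).map (fun x => F (x, 1))
        + (1 / 2 : ℝ≥0∞) • (cauchyMeasure 0 1).map (fun x => F (x, -1)) := by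
    rw [show (fun ω => F (C ω, ε ω)) = F ∘ fun ω => (C ω, ε ω) from rfl,
      ← Measure.map_map hF (hC.prodMk hε), hindep.map_prod_eq_prod_map_map hC.aemeasurable
      hε.aemeasurable, hCauchy, hRad, ← cauchyMeasure_zero_one_eq,
      Measure.map_prod_smul_dirac_add_smul_dirac _ hF]
  rw [hmap (fun p => sinh (arsinh (a * p.1) + y * p.2)) (by fun_prop),
    hmap (fun p => a * p.1 * cosh y + √(1 - a ^ 2) * sinh (y * p.2)) (by fun_prop)]
  simp only [mul_one, mul_neg]
  rw [← smul_add, ← smul_add, cauchyMeasure_zero_one_map_sinh_arsinh_shift ha y]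
end

section
/- For μ > 0, λ ≥ 0 and ξ ∈ ℝ, let z_μ have density (2K_0(μ))^{-1} e^{-μ cosh y} on ℝ. Then E[ exp(−λ e^{z_μ} − (ξ²/(2μ)) e^{z_μ}) ] = K_0(√((μ+λ)² + ξ² − λ²)) / K_0(μ), where K_0(a) := (1/2)∫_ℝ e^{-a cosh x} dx for a > 0. -/
open MeasureTheory Real Set
open scoped NNReal ENNReal

/-- The Macdonald function of order zero, via its integral representation. -/
noncomputable def K0 (a : ℝ) : ℝ := (1 / 2) * ∫ x : ℝ, Real.exp (-a * Real.cosh x)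


lemma one_add_sq_half_le_cosh (x : ℝ) : 1 + x ^ 2 / 2 ≤ Real.cosh x := by
  have ha := Real.cosh_two_mul (x / 2)
  have hb := Real.cosh_sq (x / 2)
  rw [show 2 * (x / 2) = x by ring] at ha
  have h1 : |x / 2| ≤ Real.sinh |x / 2| := Real.self_le_sinh_iff.mpr (abs_nonneg _)
  have h2 : Real.sinh |x / 2| ^ 2 = Real.sinh (x / 2) ^ 2 := by
    rcases abs_cases (x / 2) with ⟨h, _⟩ | ⟨h, _⟩ <;> rw [h] <;> simp [Real.sinh_neg]
  nlinarith [sq_abs (x / 2), abs_nonneg (x / 2)]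

lemma integrable_exp_neg_cosh {a : ℝ} (ha : 0 < a) :
    Integrable fun x : ℝ => Real.exp (-a * Real.cosh x) := by
  have hg : Integrable fun x : ℝ => Real.exp (-a) * Real.exp (-(a / 2) * x ^ 2) :=
    (integrable_exp_neg_mul_sq (by linarith)).const_mul _
  refine hg.mono' ?_ ?_
  · exact (Real.measurable_exp.comp (measurable_const.mul Real.measurable_cosh)).aestronglyMeasurable
  · filter_upwards with x
    rw [Real.norm_eq_abs, abs_of_pos (Real.exp_pos _), ← Real.exp_add]
    apply Real.exp_le_exp.mpr
    nlinarith [one_add_sq_half_le_cosh x]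

lemma K0_pos {a : ℝ} (ha : 0 < a) : 0 < K0 a := by
  have hi := integrable_exp_neg_cosh ha
  have : 0 < ∫ x : ℝ, Real.exp (-a * Real.cosh x) := by
    rw [integral_pos_iff_support_of_nonneg_ae
      (Filter.Eventually.of_forall fun x => (Real.exp_pos _).le) hi]
    have hs : (Function.support fun x : ℝ => Real.exp (-a * Real.cosh x)) = Set.univ := by
      ext x; simp [Function.mem_support, (Real.exp_pos _).ne']
    rw [hs]; simp
  unfold K0; linarith

lemma key {μ c : ℝ} (hμ : 0 < μ) (hc : 0 ≤ c) :
    ∫ y : ℝ, Real.exp (-c * Real.exp y - μ * Real.cosh y)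
      = ∫ x : ℝ, Real.exp (-Real.sqrt (μ ^ 2 + 2 * μ * c) * Real.cosh x) := by
  set t : ℝ := (1 / 2) * Real.log (μ / (2 * c + μ)) with ht
  set E : ℝ := Real.exp t with hE
  have hEpos : 0 < E := Real.exp_pos _
  have hE2 : (2 * c + μ) * E ^ 2 = μ := by
    have : E ^ 2 = Real.exp (2 * t) := by
      rw [hE, ← Real.exp_nat_mul]; norm_num
    rw [this, ht, show 2 * ((1:ℝ)/2 * Real.log (μ / (2*c+μ))) = Real.log (μ / (2*c+μ)) by ring,
      Real.exp_log (by positivity)]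
    field_simp
  have ha : Real.sqrt (μ ^ 2 + 2 * μ * c) = (2 * c + μ) * E := by
    rw [show μ ^ 2 + 2 * μ * c = ((2 * c + μ) * E) ^ 2 by nlinarith]
    exact Real.sqrt_sq (by positivity)
  rw [← MeasureTheory.integral_add_right_eq_self
    (fun y => Real.exp (-c * Real.exp y - μ * Real.cosh y)) t]
  congr 1
  funext x
  rw [ha]
  congr 1
  rw [Real.cosh_eq, Real.cosh_eq, Real.exp_add, neg_add, Real.exp_add, Real.exp_neg t, ← hE]
  field_simp
  ring_nf
  nlinarith [Real.exp_pos x, Real.exp_pos (-x), hE2]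

theorem stmt_17 {Ω : Type*} [MeasurableSpace Ω] (P : Measure Ω) [IsProbabilityMeasure P]
    (μ : ℝ) (hμ : 0 < μ) (lam ξ : ℝ) (hlam : 0 ≤ lam) (z : Ω → ℝ) (hz : Measurable z)
    (hlaw : P.map z = volume.withDensity
      (fun y => ENNReal.ofReal ((2 * K0 μ)⁻¹ * Real.exp (-μ * Real.cosh y)))) :
    ∫ ω, Real.exp (-lam * Real.exp (z ω) - ξ ^ 2 / (2 * μ) * Real.exp (z ω)) ∂P
      = K0 (Real.sqrt ((μ + lam) ^ 2 + ξ ^ 2 - lam ^ 2)) / K0 μ := by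
  set c : ℝ := lam + ξ ^ 2 / (2 * μ) with hcdef
  have hc : 0 ≤ c := by positivity
  have hK0 : 0 < K0 μ := K0_pos hμ
  set f : ℝ → ℝ := fun y => Real.exp (-lam * Real.exp y - ξ ^ 2 / (2 * μ) * Real.exp y) with hf
  have hfm : Measurable f := by fun_prop
  have h1 : ∫ ω, f (z ω) ∂P = ∫ y, f y ∂(P.map z) :=
    (integral_map hz.aemeasurable hfm.aestronglyMeasurable).symm
  set d : ℝ → ℝ := fun y => (2 * K0 μ)⁻¹ * Real.exp (-μ * Real.cosh y) with hd
  have hdm : Measurable d := by fun_prop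
  have hdnn : ∀ y, 0 ≤ d y := fun y => by positivity
  have h2 : ∫ y, f y ∂(volume.withDensity fun y => ENNReal.ofReal (d y))
      = ∫ y, d y * f y := by
    rw [show (fun y => ENNReal.ofReal (d y)) = fun y => ((d y).toNNReal : ℝ≥0∞) from rfl,
      integral_withDensity_eq_integral_smul (hdm.real_toNNReal) f]
    congr 1
    funext y
    rw [NNReal.smul_def, smul_eq_mul, Real.coe_toNNReal _ (hdnn y)]
  have h3 : ∫ y, d y * f y = (2 * K0 μ)⁻¹ * ∫ y, Real.exp (-c * Real.exp y - μ * Real.cosh y) := by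
    rw [← integral_const_mul]
    congr 1
    funext y
    rw [hd, hf]
    simp only
    rw [mul_assoc, ← Real.exp_add]
    congr 2
    ring
  have h4 := key hμ hc
  have h5 : μ ^ 2 + 2 * μ * c = (μ + lam) ^ 2 + ξ ^ 2 - lam ^ 2 := by
    rw [hcdef]; field_simp; ring
  have h6 : ∫ x : ℝ, Real.exp (-Real.sqrt ((μ + lam) ^ 2 + ξ ^ 2 - lam ^ 2) * Real.cosh x)
      = 2 * K0 (Real.sqrt ((μ + lam) ^ 2 + ξ ^ 2 - lam ^ 2)) := by
    rw [K0]; ring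
  calc ∫ ω, Real.exp (-lam * Real.exp (z ω) - ξ ^ 2 / (2 * μ) * Real.exp (z ω)) ∂P
      = ∫ y, f y ∂(P.map z) := h1
    _ = ∫ y, d y * f y := by rw [hlaw]; exact h2
    _ = (2 * K0 μ)⁻¹ * ∫ y, Real.exp (-c * Real.exp y - μ * Real.cosh y) := h3
    _ = (2 * K0 μ)⁻¹ * (2 * K0 (Real.sqrt ((μ + lam) ^ 2 + ξ ^ 2 - lam ^ 2))) := by
        rw [h4, h5, h6]
    _ = K0 (Real.sqrt ((μ + lam) ^ 2 + ξ ^ 2 - lam ^ 2)) / K0 μ := by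
        field_simp
end

section
/- For μ > 0 and ξ ∈ ℝ, let z_μ have density (2K_0(μ))^{-1} e^{-μ cosh y} on ℝ, and let λ ∈ [0, |ξ|]. Then E[ exp(−λ e^{z_μ} − (ξ²/(2μ)) e^{z_μ}) ] = E[ exp(−λ cosh z_μ) cos(√(ξ² − λ²) sinh z_μ) ]. -/
open MeasureTheory Real Set

/-!
Against the density `e^{-μ cosh y}` both sides become `∫ exp (-√((μ + λ)² + β²) cosh y) dy`,
where `β = √(ξ² - λ²)`. On the left the exponent is `c e^y + d e^{-y}` with
`4cd = (μ + λ)² + β²`, and translating `y` by `½ log (d / c)` turns it into `2 √(cd) cosh y`.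
On the right, writing `μ + λ + iβ = R e^{iθ}` with `|θ| < π / 2`, the integrand is the real part
of `exp (-R cosh (y + iθ))`. The integral of this entire function along the line `Im w = θ` does
not depend on `θ ∈ (-π / 2, π / 2)`: its `θ`-derivative is `i` times the integral of the
`y`-derivative of an integrable function, which vanishes.
-/

open Topology
open scoped Complex

lemma one_add_sq_div_four_le_cosh (y : ℝ) : 1 + y ^ 2 / 4 ≤ cosh y := by
  rw [← cosh_abs, cosh_eq]
  have := quadratic_le_exp_of_nonneg (abs_nonneg y)
  have := add_one_le_exp (-|y|)
  have := sq_abs y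
  linarith

lemma mul_exp_neg_mul_le {k : ℝ} (hk : 0 < k) (t : ℝ) :
    t * exp (-(k * t)) ≤ 2 / k * exp (-(k / 2 * t)) := by
  have hsplit : exp (-(k * t)) = exp (-(k / 2 * t)) * exp (-(k / 2 * t)) := by
    rw [← exp_add]; ring_nf
  have hinv : exp (k / 2 * t) * exp (-(k / 2 * t)) = 1 := by rw [← exp_add]; simp
  calc t * exp (-(k * t)) = 2 / k * (k / 2 * t * exp (-(k / 2 * t))) * exp (-(k / 2 * t)) := by
        rw [hsplit]; field_simp
    _ ≤ 2 / k * (exp (k / 2 * t) * exp (-(k / 2 * t))) * exp (-(k / 2 * t)) := by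
        gcongr; linarith [add_one_le_exp (k / 2 * t)]
    _ = 2 / k * exp (-(k / 2 * t)) := by rw [hinv, mul_one]

lemma integrable_exp_neg_mul_cosh {k : ℝ} (hk : 0 < k) :
    Integrable fun y : ℝ => exp (-(k * cosh y)) := by
  refine (integrable_exp_neg_mul_sq (by positivity : 0 < k / 4)).mono' (by fun_prop)
    (.of_forall fun y => ?_)
  rw [norm_of_nonneg (exp_pos _).le, exp_le_exp]
  nlinarith [one_add_sq_div_four_le_cosh y]

lemma integrable_cosh_mul_exp_neg_mul_cosh {k : ℝ} (hk : 0 < k) :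
    Integrable fun y : ℝ => cosh y * exp (-(k * cosh y)) := by
  refine ((integrable_exp_neg_mul_cosh (half_pos hk)).const_mul (2 / k)).mono' (by fun_prop)
    (.of_forall fun y => ?_)
  rw [norm_of_nonneg (by positivity)]
  exact mul_exp_neg_mul_le hk _

lemma integral_exp_neg_mul_exp_add_mul_exp_neg {c d : ℝ} (hc : 0 < c) (hd : 0 < d) :
    ∫ y, exp (-(c * exp y + d * exp (-y))) = ∫ y, exp (-(2 * √(c * d) * cosh y)) := by
  obtain ⟨a, ha, rfl⟩ : ∃ a, 0 < a ∧ c = a ^ 2 := ⟨√c, sqrt_pos.2 hc, (sq_sqrt hc.le).symm⟩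
  obtain ⟨b, hb, rfl⟩ : ∃ b, 0 < b ∧ d = b ^ 2 := ⟨√d, sqrt_pos.2 hd, (sq_sqrt hd.le).symm⟩
  rw [← integral_add_right_eq_self (fun y => exp (-(a ^ 2 * exp y + b ^ 2 * exp (-y))))
    (log (b / a))]
  congr 1; ext y
  rw [← mul_pow, sqrt_sq (by positivity), cosh_eq, neg_add y, exp_add, exp_add, exp_neg (log _),
    exp_log (by positivity)]
  field_simp

noncomputable def coshKernel (R : ℝ) (w : ℂ) : ℂ := cexp (-(R * Complex.cosh w))

lemma cosh_ofReal_add_mul_I (y θ : ℝ) :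
    Complex.cosh (y + θ * Complex.I)
      = (cosh y * cos θ : ℝ) + (sinh y * sin θ : ℝ) * Complex.I := by
  rw [Complex.cosh_add, Complex.cosh_mul_I, Complex.sinh_mul_I]
  push_cast
  ring

lemma norm_coshKernel (R y θ : ℝ) :
    ‖coshKernel R (y + θ * Complex.I)‖ = exp (-(R * cos θ * cosh y)) := by
  have hre : (Complex.cosh (y + θ * Complex.I)).re = cosh y * cos θ := by
    rw [cosh_ofReal_add_mul_I]
    simp only [Complex.add_re, Complex.ofReal_re, Complex.mul_I_re, Complex.ofReal_im, neg_zero,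
      add_zero]
  rw [coshKernel, Complex.norm_exp, Complex.neg_re, Complex.re_ofReal_mul, hre]
  congr 1; ring

lemma norm_sinh_le_cosh_re (w : ℂ) : ‖Complex.sinh w‖ ≤ cosh w.re := by
  calc ‖Complex.sinh w‖ ≤ (‖cexp w‖ + ‖cexp (-w)‖) / 2 := by
        rw [Complex.sinh, norm_div, Complex.norm_two]
        gcongr
        exact norm_sub_le _ _
    _ = cosh w.re := by simp [Complex.norm_exp, cosh_eq]

@[fun_prop]
lemma continuous_coshKernel (R : ℝ) : Continuous (coshKernel R) := by
  unfold coshKernel; fun_prop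

lemma hasDerivAt_coshKernel (R : ℝ) (w : ℂ) :
    HasDerivAt (coshKernel R) (coshKernel R w * -(R * Complex.sinh w)) w :=
  ((Complex.hasDerivAt_cosh w).const_mul (R : ℂ)).neg.cexp

lemma hasDerivAt_coshKernel_horizontal (R y θ : ℝ) :
    HasDerivAt (fun y : ℝ => coshKernel R (y + θ * Complex.I))
      (coshKernel R (y + θ * Complex.I) * -(R * Complex.sinh (y + θ * Complex.I))) y :=
  (hasDerivAt_coshKernel R _).comp_add_const _ _ |>.comp_ofReal

lemma hasDerivAt_coshKernel_vertical (R y θ : ℝ) :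
    HasDerivAt (fun θ : ℝ => coshKernel R (y + θ * Complex.I))
      (coshKernel R (y + θ * Complex.I) * -(R * Complex.sinh (y + θ * Complex.I)) * Complex.I)
      θ := by
  have hline : HasDerivAt (fun t : ℂ => y + t * Complex.I) Complex.I θ := by
    simpa using ((hasDerivAt_id (θ : ℂ)).mul_const Complex.I).const_add (y : ℂ)
  exact ((hasDerivAt_coshKernel R _).comp _ hline).comp_ofReal

lemma norm_coshKernel_mul_sinh_le (R y θ : ℝ) :
    ‖coshKernel R (y + θ * Complex.I) * -(R * Complex.sinh (y + θ * Complex.I))‖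
      ≤ |R| * (cosh y * exp (-(R * cos θ * cosh y))) := by
  have hsinh : ‖Complex.sinh (y + θ * Complex.I)‖ ≤ cosh y := by
    simpa using norm_sinh_le_cosh_re (y + θ * Complex.I)
  rw [norm_mul, norm_neg, norm_mul, norm_coshKernel, Complex.norm_real, norm_eq_abs]
  calc exp (-(R * cos θ * cosh y)) * (|R| * ‖Complex.sinh (y + θ * Complex.I)‖)
      ≤ exp (-(R * cos θ * cosh y)) * (|R| * cosh y) := by gcongr
    _ = |R| * (cosh y * exp (-(R * cos θ * cosh y))) := by ring

section

variable {R θ : ℝ}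

lemma integrable_coshKernel_horizontal (h : 0 < R * cos θ) :
    Integrable fun y : ℝ => coshKernel R (y + θ * Complex.I) :=
  (integrable_exp_neg_mul_cosh h).mono' (by fun_prop)
    (.of_forall fun y => (norm_coshKernel R y θ).le)

lemma integrable_deriv_coshKernel_horizontal (h : 0 < R * cos θ) :
    Integrable fun y : ℝ =>
      coshKernel R (y + θ * Complex.I) * -(R * Complex.sinh (y + θ * Complex.I)) :=
  ((integrable_cosh_mul_exp_neg_mul_cosh h).const_mul |R|).mono' (by fun_prop)
    (.of_forall fun y => norm_coshKernel_mul_sinh_le R y θ)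

lemma integral_deriv_coshKernel_horizontal (h : 0 < R * cos θ) :
    ∫ y : ℝ, coshKernel R (y + θ * Complex.I) * -(R * Complex.sinh (y + θ * Complex.I)) = 0 :=
  integral_eq_zero_of_hasDerivAt_of_integrable (hasDerivAt_coshKernel_horizontal R · θ)
    (integrable_deriv_coshKernel_horizontal h) (integrable_coshKernel_horizontal h)

lemma hasDerivAt_integral_coshKernel_horizontal (h : 0 < R * cos θ) :
    HasDerivAt (fun t : ℝ => ∫ y : ℝ, coshKernel R (y + t * Complex.I)) 0 θ := by
  set k := R * cos θ / 2
  have hk : 0 < k := half_pos h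
  have hs : {t | k < R * cos t} ∈ 𝓝 θ :=
    ((continuous_const.mul continuous_cos).isOpen_preimage _ isOpen_Ioi).mem_nhds
      (half_lt_self h)
  have hbound : ∀ y : ℝ, ∀ t ∈ {t | k < R * cos t},
      ‖coshKernel R (y + t * Complex.I) * -(R * Complex.sinh (y + t * Complex.I)) * Complex.I‖
        ≤ |R| * (cosh y * exp (-(k * cosh y))) := fun y t ht => by
    rw [norm_mul, Complex.norm_I, mul_one]
    refine (norm_coshKernel_mul_sinh_le R y t).trans ?_
    gcongr
    exact ht.le
  have hderiv := hasDerivAt_integral_of_dominated_loc_of_deriv_le hs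
    (.of_forall fun t => by fun_prop)
    (integrable_coshKernel_horizontal h) (by fun_prop) (.of_forall hbound)
    ((integrable_cosh_mul_exp_neg_mul_cosh hk).const_mul |R|)
    (.of_forall fun y t _ => hasDerivAt_coshKernel_vertical R y t)
  have := hderiv.2
  rwa [integral_mul_const, integral_deriv_coshKernel_horizontal h, zero_mul] at this

lemma integral_coshKernel_horizontal_eq (hR : 0 < R) (hθ : |θ| < π / 2) :
    ∫ y : ℝ, coshKernel R (y + θ * Complex.I) = ∫ y : ℝ, coshKernel R y := by
  have hderiv : ∀ t ∈ Ioo (-(π / 2)) (π / 2),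
      HasDerivAt (fun t : ℝ => ∫ y : ℝ, coshKernel R (y + t * Complex.I)) 0 t :=
    fun t ht => hasDerivAt_integral_coshKernel_horizontal (mul_pos hR (cos_pos_of_mem_Ioo ht))
  have := isOpen_Ioo.is_const_of_deriv_eq_zero isPreconnected_Ioo
    (fun t ht => (hderiv t ht).differentiableAt.differentiableWithinAt)
    (fun t ht => (hderiv t ht).deriv) (abs_lt.1 hθ)
    (show (0 : ℝ) ∈ Ioo (-(π / 2)) (π / 2) by constructor <;> linarith [pi_pos])
  simpa using this

end

lemma integral_exp_neg_mul_cosh_mul_cos_mul_sinh {A : ℝ} (hA : 0 < A) (β : ℝ) :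
    ∫ y, exp (-(A * cosh y)) * cos (β * sinh y) = ∫ y, exp (-(√(A ^ 2 + β ^ 2) * cosh y)) := by
  set w : ℂ := A + β * Complex.I
  have hw : w ≠ 0 := fun h => by simpa [w, hA.ne'] using congrArg Complex.re h
  have hR : 0 < ‖w‖ := norm_pos_iff.2 hw
  have hRA : ‖w‖ * cos (Complex.arg w) = A := by
    rw [Complex.cos_arg hw]; field_simp; simp [w]
  have hRβ : ‖w‖ * sin (Complex.arg w) = β := by
    rw [Complex.sin_arg]; field_simp; simp [w]
  have harg : |Complex.arg w| < π / 2 := Complex.abs_arg_lt_pi_div_two_iff.2 (.inl (by simpa [w]))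
  have hre : ∀ y : ℝ, exp (-(A * cosh y)) * cos (β * sinh y)
      = (coshKernel ‖w‖ (y + Complex.arg w * Complex.I)).re := fun y => by
    have hexponent : -(‖w‖ * Complex.cosh (y + Complex.arg w * Complex.I))
        = (-(A * cosh y) : ℝ) + (-(β * sinh y) : ℝ) * Complex.I := by
      rw [cosh_ofReal_add_mul_I, ← hRA, ← hRβ]; push_cast; ring
    rw [coshKernel, hexponent, Complex.exp_re]
    simp [Complex.sinh_ofReal_re]
  have hreal : ∀ y : ℝ, coshKernel ‖w‖ y = (exp (-(‖w‖ * cosh y)) : ℝ) := fun y => by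
    simp [coshKernel]
  calc ∫ y, exp (-(A * cosh y)) * cos (β * sinh y)
      = ∫ y : ℝ, (coshKernel ‖w‖ (y + Complex.arg w * Complex.I)).re := by simp_rw [hre]
    _ = (∫ y : ℝ, coshKernel ‖w‖ (y + Complex.arg w * Complex.I)).re :=
        integral_re (integrable_coshKernel_horizontal (by rw [hRA]; exact hA))
    _ = ∫ y, exp (-(‖w‖ * cosh y)) := by
        rw [integral_coshKernel_horizontal_eq hR harg]
        simp_rw [hreal]
        rw [integral_complex_ofReal, Complex.ofReal_re]
    _ = ∫ y, exp (-(√(A ^ 2 + β ^ 2) * cosh y)) := by rw [Complex.norm_add_mul_I]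

lemma integral_comp_eq_integral_mul_of_map_eq_withDensity {Ω α : Type*} [MeasurableSpace Ω]
    [MeasurableSpace α] {P : Measure Ω} {ν : Measure α} {z : Ω → α} (hz : AEMeasurable z P)
    {ρ : α → ℝ} (hρm : Measurable ρ) (hρ : ∀ y, 0 ≤ ρ y)
    (hlaw : P.map z = ν.withDensity fun y => ENNReal.ofReal (ρ y)) {f : α → ℝ}
    (hf : Measurable f) :
    ∫ ω, f (z ω) ∂P = ∫ y, ρ y * f y ∂ν := by
  rw [← integral_map hz hf.aestronglyMeasurable, hlaw,
    integral_withDensity_eq_integral_toReal_smul hρm.ennreal_ofReal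
      (.of_forall fun _ => ENNReal.ofReal_lt_top)]
  simp_rw [ENNReal.toReal_ofReal (hρ _), smul_eq_mul]

lemma integral_exp_neg_mul_cosh_mul_exp_eq_integral_exp_mul_cos {μ lam ξ : ℝ} (hμ : 0 < μ)
    (hA : 0 < μ + lam) (hlamξ : lam ^ 2 ≤ ξ ^ 2) :
    ∫ y, exp (-μ * cosh y) * exp (-lam * exp y - ξ ^ 2 / (2 * μ) * exp y)
      = ∫ y, exp (-μ * cosh y) * (exp (-lam * cosh y) * cos (√(ξ ^ 2 - lam ^ 2) * sinh y)) := by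
  set β := √(ξ ^ 2 - lam ^ 2)
  set c := μ / 2 + lam + ξ ^ 2 / (2 * μ)
  set d := μ / 2
  have hβ : β ^ 2 = ξ ^ 2 - lam ^ 2 := sq_sqrt (by linarith)
  have hc : c = ((μ + lam) ^ 2 + β ^ 2) / (2 * μ) := by simp only [c]; rw [hβ]; field_simp; ring
  have hcpos : 0 < c := by rw [hc]; positivity
  have hcd : 2 * √(c * d) = √((μ + lam) ^ 2 + β ^ 2) := by
    rw [← sqrt_sq (by positivity : 0 ≤ 2 * √(c * d)), mul_pow, sq_sqrt (by positivity), hc]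
    simp only [d]
    field_simp
  calc ∫ y, exp (-μ * cosh y) * exp (-lam * exp y - ξ ^ 2 / (2 * μ) * exp y)
      = ∫ y, exp (-(c * exp y + d * exp (-y))) := by
        congr 1; ext y; rw [← exp_add, cosh_eq]; congr 1; simp only [c, d]; field_simp; ring
    _ = ∫ y, exp (-((μ + lam) * cosh y)) * cos (β * sinh y) := by
        rw [integral_exp_neg_mul_exp_add_mul_exp_neg hcpos (by positivity), hcd,
          integral_exp_neg_mul_cosh_mul_cos_mul_sinh hA]
    _ = ∫ y, exp (-μ * cosh y) * (exp (-lam * cosh y) * cos (β * sinh y)) := by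
        congr 1; ext y; rw [← mul_assoc, ← exp_add]; congr 2; ring

lemma K0_nonneg (a : ℝ) : 0 ≤ K0 a :=
  mul_nonneg (by norm_num) (integral_nonneg fun _ => (exp_pos _).le)

theorem stmt_18_general {Ω : Type*} [MeasurableSpace Ω] (P : Measure Ω)
    (μ : ℝ) (hμ : 0 < μ) (lam ξ : ℝ) (hlam : 0 ≤ lam) (hlamξ : lam ≤ |ξ|)
    (z : Ω → ℝ) (hz : Measurable z)
    (hlaw : P.map z = volume.withDensity
      (fun y => ENNReal.ofReal ((2 * K0 μ)⁻¹ * Real.exp (-μ * Real.cosh y)))) :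
    ∫ ω, Real.exp (-lam * Real.exp (z ω) - ξ ^ 2 / (2 * μ) * Real.exp (z ω)) ∂P
      = ∫ ω, Real.exp (-lam * Real.cosh (z ω)) * Real.cos (Real.sqrt (ξ ^ 2 - lam ^ 2) * Real.sinh (z ω)) ∂P := by
  have hρ : ∀ y, 0 ≤ (2 * K0 μ)⁻¹ * exp (-μ * cosh y) := fun y => by
    have := K0_nonneg μ
    positivity
  rw [integral_comp_eq_integral_mul_of_map_eq_withDensity hz.aemeasurable (by fun_prop) hρ hlaw
      (f := fun y => exp (-lam * exp y - ξ ^ 2 / (2 * μ) * exp y)) (by fun_prop),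
    integral_comp_eq_integral_mul_of_map_eq_withDensity hz.aemeasurable (by fun_prop) hρ hlaw
      (f := fun y => exp (-lam * cosh y) * cos (√(ξ ^ 2 - lam ^ 2) * sinh y)) (by fun_prop)]
  simp_rw [mul_assoc, integral_const_mul]
  rw [integral_exp_neg_mul_cosh_mul_exp_eq_integral_exp_mul_cos hμ (by linarith)
    (sq_le_sq.2 (by rwa [abs_of_nonneg hlam]))]

theorem stmt_18 {Ω : Type*} [MeasurableSpace Ω] (P : Measure Ω) [IsProbabilityMeasure P]
    (μ : ℝ) (hμ : 0 < μ) (lam ξ : ℝ) (hlam : 0 ≤ lam) (hlamξ : lam ≤ |ξ|)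
    (z : Ω → ℝ) (hz : Measurable z)
    (hlaw : P.map z = volume.withDensity
      (fun y => ENNReal.ofReal ((2 * K0 μ)⁻¹ * Real.exp (-μ * Real.cosh y)))) :
    ∫ ω, Real.exp (-lam * Real.exp (z ω) - ξ ^ 2 / (2 * μ) * Real.exp (z ω)) ∂P
      = ∫ ω, Real.exp (-lam * Real.cosh (z ω)) * Real.cos (Real.sqrt (ξ ^ 2 - lam ^ 2) * Real.sinh (z ω)) ∂P :=
  stmt_18_general P μ hμ lam ξ hlam hlamξ z hz hlaw
end
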